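/- arXiv:1803.03588 — 3 statements merged into one kernel-verified Lean document; each statement's English description precedes it below -/
import Mathlib

section
/- For every graph H there exists c > 0 such that every H-free graph G with n > 0 vertices satisfies max(α(G), ω(G)) ≥ 2^{c·√(log n)}. -/
/-!
If `G` is `H`-free with `|H| = k` and `0 < ε ≤ 1`, every vertex set `U` contains disjoint `S`, `T`
of size about `(ε/2)ᵏ |U| / k` such that every vertex of `S` has fewer than `ε |T|` neighbours
in `T`, or every vertex of `S` has fewer than `ε |T|` non-neighbours in `T`: otherwise a greedy
procedure embeds `H` in `U`. With `ε = 2^-(a+b+1)` this gives, by induction on `a + b`, an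
independent set of size `2ᵃ` or a clique of size `2ᵇ` among any `2^(2(k+1)(a+b)²)` vertices.
In the sparse case an independent set of size `2ᵃ⁻¹` in `S` has no neighbours in half of `T`, and a
second one found among its non-neighbours in `T` doubles it; the dense case is the same in `Gᶜ`.
Taking `2ᵃ = 2ᵇ > max(α, ω)` gives `log n = O(k log² max(α, ω))`.
-/

open Finset Function
open scoped Classical

namespace SimpleGraph

variable {V : Type*} (G : SimpleGraph V)

def IsSparseTo (ε : ℝ) (S T : Finset V) : Prop :=
  ∀ v ∈ S, (#{u ∈ T | G.Adj v u} : ℝ) < ε * #T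

def HasSparseOrDensePair (ε μ : ℝ) (U : Finset V) : Prop :=
  ∃ S ⊆ U, ∃ T ⊆ U, Disjoint S T ∧ μ ≤ #S ∧ μ ≤ #T ∧
    (G.IsSparseTo ε S T ∨ Gᶜ.IsSparseTo ε S T)

variable {G}

theorem HasSparseOrDensePair.mono {ε μ μ' : ℝ} {U : Finset V} (hμ : μ' ≤ μ)
    (h : G.HasSparseOrDensePair ε μ U) : G.HasSparseOrDensePair ε μ' U := by
  obtain ⟨S, hSU, T, hTU, hST, hS, hT, hsp⟩ := h
  exact ⟨S, hSU, T, hTU, hST, hμ.trans hS, hμ.trans hT, hsp⟩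

theorem isSparseTo_or_compl_of_card_filter_iff_lt {ε : ℝ} {S T : Finset V} (hST : Disjoint S T)
    (p : Prop) (h : ∀ v ∈ S, (#{u ∈ T | G.Adj v u ↔ p} : ℝ) < ε * #T) :
    G.IsSparseTo ε S T ∨ Gᶜ.IsSparseTo ε S T := by
  by_cases hp : p
  · exact Or.inl fun v hv => by simpa [hp] using h v hv
  · refine Or.inr fun v hv => ?_
    have hvT : v ∉ T := Finset.disjoint_left.mp hST hv
    convert h v hv using 3
    ext u
    simp only [mem_filter, compl_adj, hp, iff_false, and_congr_right_iff]
    exact fun hu => and_iff_right (ne_of_mem_of_not_mem hu hvT).symm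

theorem hasSparseOrDensePair_of_forall_exists_lt {ε m : ℝ} {U A : Finset V} {k : ℕ}
    {B : Fin k → Finset V} (p : Fin k → Prop) (hm : 0 < m) (hA : m ≤ #A) (hB : ∀ j, m ≤ #(B j))
    (hAU : A ⊆ U) (hBU : ∀ j, B j ⊆ U) (hAB : ∀ j, Disjoint A (B j))
    (hbad : ∀ v ∈ A, ∃ j, (#{u ∈ B j | G.Adj v u ↔ p j} : ℝ) < ε * #(B j)) :
    G.HasSparseOrDensePair ε (m / (k + 1)) U := by
  set bad : Fin k → Finset V := fun j => {v ∈ A | (#{u ∈ B j | G.Adj v u ↔ p j} : ℝ) < ε * #(B j)}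
  obtain ⟨v, hv⟩ : A.Nonempty := card_pos.mp (by exact_mod_cast hm.trans_le hA)
  have : Nonempty (Fin k) := ⟨(hbad v hv).choose⟩
  obtain ⟨j, -, hj⟩ := exists_max_image univ (fun j => #(bad j)) univ_nonempty
  have hcover : #A ≤ (k + 1) * #(bad j) := by
    calc #A ≤ #(univ.biUnion bad) := card_le_card fun v hv => by
          obtain ⟨i, hi⟩ := hbad v hv
          exact mem_biUnion.mpr ⟨i, mem_univ _, mem_filter.mpr ⟨hv, hi⟩⟩
      _ ≤ #(univ : Finset (Fin k)) * #(bad j) :=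
          card_biUnion_le_card_mul _ _ _ fun i _ => hj i (mem_univ _)
      _ ≤ (k + 1) * #(bad j) := by rw [card_univ, Fintype.card_fin]; gcongr; omega
  refine ⟨bad j, (filter_subset _ _).trans hAU, B j, hBU j,
    disjoint_of_subset_left (filter_subset _ _) (hAB j), ?_, ?_,
    isSparseTo_or_compl_of_card_filter_iff_lt
      (disjoint_of_subset_left (filter_subset _ _) (hAB j)) (p j) fun v hv => (mem_filter.mp hv).2⟩
  · rw [div_le_iff₀ (by positivity), mul_comm]
    exact hA.trans (by exact_mod_cast hcover)
  · exact (div_le_self hm.le (by linarith [k.cast_nonneg (α := ℝ)])).trans (hB j)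

theorem exists_embedding_cons {k : ℕ} {H : SimpleGraph (Fin (k + 1))} {C : Fin (k + 1) → Finset V}
    (hC : Pairwise (Disjoint on C)) {v : V} (hv : v ∈ C 0) (f : H.comap Fin.succ ↪g G)
    (hf : ∀ j, f j ∈ C j.succ) (hadj : ∀ j, G.Adj v (f j) ↔ H.Adj 0 j.succ) :
    ∃ g : H ↪g G, ∀ i, g i ∈ C i := by
  have hvf : v ∉ Set.range f := by
    rintro ⟨j, rfl⟩
    exact Finset.disjoint_left.mp (hC (Fin.succ_ne_zero j).symm) hv (hf j)
  refine ⟨⟨⟨Fin.cons v f, Fin.cons_injective_iff.mpr ⟨hvf, f.injective⟩⟩, fun {a b} => ?_⟩,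
    Fin.cases hv hf⟩
  cases a using Fin.cases <;> cases b using Fin.cases <;>
    simp [hadj, G.adj_comm _ v, H.adj_comm _ 0]

/-- Greedy embedding: place vertex `0` of `H` at some `v ∈ C 0` whose neighbourhood (or
non-neighbourhood, as `H` prescribes) takes an `ε`-fraction of every later `C j`, and recurse on
these fractions; if no such `v` exists, some later `C j` forms a sparse or dense pair with the
vertices of `C 0` that fail for it. -/
theorem exists_embedding_or_hasSparseOrDensePair {ε : ℝ} (hε₀ : 0 < ε) (hε₁ : ε ≤ 1)
    (U : Finset V) {k : ℕ} (H : SimpleGraph (Fin k)) (C : Fin k → Finset V) {m : ℝ} (hm : 0 < m)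
    (hCm : ∀ i, m ≤ #(C i)) (hC : Pairwise (Disjoint on C)) (hCU : ∀ i, C i ⊆ U) :
    (∃ f : H ↪g G, ∀ i, f i ∈ C i) ∨ G.HasSparseOrDensePair ε ((ε / 2) ^ k * m) U := by
  induction k generalizing m with
  | zero => exact Or.inl ⟨RelEmbedding.ofIsEmpty _ _, fun i => i.elim0⟩
  | succ k ih =>
    by_cases hgood : ∃ v ∈ C 0, ∀ j : Fin k,
        ε * #(C j.succ) ≤ (#{u ∈ C j.succ | G.Adj v u ↔ H.Adj 0 j.succ} : ℝ)
    · obtain ⟨v, hv, hgood⟩ := hgood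
      rcases ih (H.comap Fin.succ) (fun j => {u ∈ C j.succ | G.Adj v u ↔ H.Adj 0 j.succ})
        (mul_pos hε₀ hm) (fun j => (mul_le_mul_of_nonneg_left (hCm _) hε₀.le).trans (hgood j))
        (fun i j hij => disjoint_filter_filter (hC (Fin.succ_injective _ |>.ne hij)))
        (fun j => (filter_subset _ _).trans (hCU _)) with ⟨f, hf⟩ | hpair
      · exact Or.inl (exists_embedding_cons hC hv f (fun j => (mem_filter.mp (hf j)).1)
          fun j => (mem_filter.mp (hf j)).2)
      · refine Or.inr (hpair.mono ?_)
        have := mul_pos (pow_pos (half_pos hε₀) k) hm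
        rw [pow_succ]
        nlinarith
    · push Not at hgood
      refine Or.inr ((hasSparseOrDensePair_of_forall_exists_lt (fun j => H.Adj 0 j.succ) hm (hCm 0)
        (fun j => hCm j.succ) (hCU 0) (fun j => hCU j.succ)
        (fun j => hC (Fin.succ_ne_zero j).symm) hgood).mono ?_)
      have hk : ((k : ℝ) + 1) ≤ 2 ^ (k + 1) := by exact_mod_cast Nat.lt_two_pow_self.le
      rw [le_div_iff₀ (by positivity)]
      calc (ε / 2) ^ (k + 1) * m * (k + 1) ≤ (ε / 2) ^ (k + 1) * m * 2 ^ (k + 1) := by gcongr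
        _ = ε ^ (k + 1) * m := by rw [div_pow]; field_simp
        _ ≤ m := mul_le_of_le_one_left hm.le (pow_le_one₀ hε₀.le hε₁)

theorem exists_pairwise_disjoint_subsets {U : Finset V} {k m : ℕ} (h : k * m ≤ #U) :
    ∃ C : Fin k → Finset V, Pairwise (Disjoint on C) ∧ ∀ i, C i ⊆ U ∧ #(C i) = m := by
  obtain ⟨e⟩ : Nonempty (Fin k × Fin m ↪ U) := Function.Embedding.nonempty_of_card_le (by simpa)
  have he : Injective fun x => (e x : V) := Subtype.val_injective.comp e.injective
  refine ⟨fun i => univ.image fun j => (e (i, j) : V), fun i i' hii' => ?_, fun i => ⟨?_, ?_⟩⟩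
  · simp only [onFun, Finset.disjoint_left, mem_image, mem_univ, true_and]
    rintro _ ⟨j, rfl⟩ ⟨j', hj'⟩
    exact hii' (Prod.ext_iff.mp (he hj')).1.symm
  · simp [image_subset_iff]
  · exact (card_image_of_injective _ (he.comp (Prod.mk_right_injective i))).trans (by simp)

theorem hasSparseOrDensePair_of_free {k : ℕ} {H : SimpleGraph (Fin k)} (hfree : ¬Nonempty (H ↪g G))
    {ε : ℝ} (hε₀ : 0 < ε) (hε₁ : ε ≤ 1) {U : Finset V} {m : ℕ} (hm : 0 < m) (hU : k * m ≤ #U) :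
    G.HasSparseOrDensePair ε ((ε / 2) ^ k * m) U := by
  obtain ⟨C, hC, hCU⟩ := exists_pairwise_disjoint_subsets hU
  refine (exists_embedding_or_hasSparseOrDensePair hε₀ hε₁ U H C (Nat.cast_pos.mpr hm)
    (fun i => by exact_mod_cast (hCU i).2.ge) hC (fun i => (hCU i).1)).resolve_left ?_
  exact fun ⟨f, _⟩ => hfree ⟨f⟩

variable (G) in
def HasIndepOrClique (a b : ℕ) (U : Finset V) : Prop :=
  ∃ W ⊆ U, Gᶜ.IsNClique (2 ^ a) W ∨ G.IsNClique (2 ^ b) W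

theorem HasIndepOrClique.mono {a b : ℕ} {U U' : Finset V} (hU : U ⊆ U')
    (h : G.HasIndepOrClique a b U) : G.HasIndepOrClique a b U' :=
  let ⟨W, hWU, hW⟩ := h
  ⟨W, hWU.trans hU, hW⟩

theorem hasIndepOrClique_compl {a b : ℕ} {U : Finset V} :
    Gᶜ.HasIndepOrClique a b U ↔ G.HasIndepOrClique b a U := by
  simp only [HasIndepOrClique, compl_compl, or_comm]

theorem hasIndepOrClique_zero_left {b : ℕ} {U : Finset V} (hU : U.Nonempty) :
    G.HasIndepOrClique 0 b U :=
  let ⟨v, hv⟩ := hU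
  ⟨{v}, singleton_subset_iff.mpr hv, Or.inl (isNClique_singleton.mpr (pow_zero 2))⟩

theorem IsNClique.union {m n : ℕ} {s t : Finset V} (hs : G.IsNClique m s) (ht : G.IsNClique n t)
    (hst : Disjoint s t) (hadj : ∀ v ∈ s, ∀ w ∈ t, G.Adj v w) : G.IsNClique (m + n) (s ∪ t) := by
  refine ⟨?_, by rw [card_union_of_disjoint hst, hs.card_eq, ht.card_eq]⟩
  rw [coe_union, IsClique, Set.pairwise_union]
  exact ⟨hs.isClique, ht.isClique, fun v hv w hw _ => ⟨hadj v hv w hw, (hadj v hv w hw).symm⟩⟩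

theorem card_le_card_filter_add_sum_card_filter_adj (W T : Finset V) :
    #T ≤ #{u ∈ T | ∀ w ∈ W, ¬G.Adj w u} + ∑ w ∈ W, #{u ∈ T | G.Adj w u} := by
  calc #T ≤ #({u ∈ T | ∀ w ∈ W, ¬G.Adj w u} ∪ W.biUnion fun w => {u ∈ T | G.Adj w u}) :=
        card_le_card fun u hu => by
          by_cases h : ∀ w ∈ W, ¬G.Adj w u
          · exact mem_union_left _ (mem_filter.mpr ⟨hu, h⟩)
          · push Not at h
            obtain ⟨w, hw, hwu⟩ := h
            exact mem_union_right _ (mem_biUnion.mpr ⟨w, hw, mem_filter.mpr ⟨hu, hwu⟩⟩)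
    _ ≤ _ := (card_union_le _ _).trans (add_le_add_right card_biUnion_le _)

/-- If every vertex of `S` sees less than a `2⁻ᵃ⁻¹`-fraction of `T`, an independent set
`W ⊆ S` of size `2ᵃ` has no neighbours in more than half of `T`, where a second independent
set of size `2ᵃ` can be found and joined to `W`. -/
theorem HasIndepOrClique.succ_of_isSparseTo {S T : Finset V} (hST : Disjoint S T) {a b : ℕ}
    {ε : ℝ} (hε : ε * 2 ^ (a + 1) ≤ 1) (hsp : G.IsSparseTo ε S T) (hS : G.HasIndepOrClique a b S)
    (hT : ∀ T' ⊆ T, #T ≤ 2 * #T' → G.HasIndepOrClique a b T') :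
    G.HasIndepOrClique (a + 1) b (S ∪ T) := by
  obtain ⟨W, hWS, hW | hW⟩ := hS
  swap
  · exact ⟨W, hWS.trans subset_union_left, Or.inr hW⟩
  set T' := {u ∈ T | ∀ w ∈ W, ¬G.Adj w u}
  have hT' : #T ≤ 2 * #T' := by
    have hsum : (∑ w ∈ W, #{u ∈ T | G.Adj w u} : ℝ) ≤ #T / 2 := by
      calc (∑ w ∈ W, #{u ∈ T | G.Adj w u} : ℝ) ≤ #W • (ε * #T) :=
            sum_le_card_nsmul _ _ _ fun w hw => (hsp w (hWS hw)).le
        _ ≤ #T / 2 := by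
            rw [nsmul_eq_mul, hW.card_eq, Nat.cast_pow, Nat.cast_two]
            rw [pow_succ] at hε
            nlinarith [(#T).cast_nonneg (α := ℝ)]
    have hcover : (#T : ℝ) ≤ #T' + ∑ w ∈ W, #{u ∈ T | G.Adj w u} := by
      exact_mod_cast card_le_card_filter_add_sum_card_filter_adj W T
    push_cast at hcover
    exact_mod_cast (show (#T : ℝ) ≤ 2 * #T' by linarith)
  obtain ⟨W', hW'T', hW' | hW'⟩ := hT T' (filter_subset _ _) hT'
  · have hW'T : W' ⊆ T := hW'T'.trans (filter_subset _ _)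
    refine ⟨W ∪ W', union_subset_union hWS hW'T, Or.inl ?_⟩
    rw [pow_succ, mul_two]
    refine hW.union hW' (disjoint_of_subset_left hWS (disjoint_of_subset_right hW'T hST))
      fun w hw u hu => ?_
    exact (compl_adj G w u).mpr ⟨fun h => Finset.disjoint_left.mp hST (hWS hw) (h ▸ hW'T hu),
      (mem_filter.mp (hW'T' hu)).2 w hw⟩
  · exact ⟨W', hW'T'.trans ((filter_subset _ _).trans subset_union_right), Or.inr hW'⟩

variable (G) in
theorem not_hasIndepOrClique [Finite V] {a b : ℕ} {U : Finset V} (ha : Gᶜ.cliqueNum < 2 ^ a)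
    (hb : G.cliqueNum < 2 ^ b) : ¬G.HasIndepOrClique a b U := by
  rintro ⟨W, -, hW | hW⟩
  · exact ha.not_ge (hW.card_eq ▸ hW.isClique.card_le_cliqueNum)
  · exact hb.not_ge (hW.card_eq ▸ hW.isClique.card_le_cliqueNum)

variable (G) in
theorem one_le_cliqueNum [Finite V] [Nonempty V] : 1 ≤ G.cliqueNum := by
  obtain ⟨v⟩ := ‹Nonempty V›
  have : G.IsClique (({v} : Finset V) : Set V) := by simp
  simpa using this.card_le_cliqueNum

variable (G) in
theorem two_le_max_cliqueNum [Finite V] [Nontrivial V] : 2 ≤ max Gᶜ.cliqueNum G.cliqueNum := by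
  obtain ⟨u, v, huv⟩ := exists_pair_ne V
  have hpair : ∀ G' : SimpleGraph V, G'.Adj u v → 2 ≤ G'.cliqueNum := fun G' h => by
    have hcl : G'.IsClique ((({u, v} : Finset V)) : Set V) := by
      rw [coe_pair]; exact isClique_pair.mpr fun _ => h
    simpa [card_pair huv] using hcl.card_le_cliqueNum
  by_cases h : G.Adj u v
  · exact le_max_of_le_right (hpair G h)
  · exact le_max_of_le_left (hpair Gᶜ ((compl_adj G u v).mpr ⟨huv, h⟩))

section Free

variable {k : ℕ} {H : SimpleGraph (Fin k)}

theorem hasIndepOrClique_succ_succ (hfree : ¬Nonempty (H ↪g G)) {a b : ℕ} {U : Finset V}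
    (hU : 2 ^ (2 * (k + 1) * (a + b + 2) ^ 2) ≤ #U)
    (ihS : ∀ U' : Finset V, 2 ^ (2 * (k + 1) * (a + b + 1) ^ 2) ≤ #U' →
      G.HasIndepOrClique a (b + 1) U')
    (ihT : ∀ U' : Finset V, 2 ^ (2 * (k + 1) * (a + b + 1) ^ 2) ≤ #U' →
      G.HasIndepOrClique (a + 1) b U') :
    G.HasIndepOrClique (a + 1) (b + 1) U := by
  set N := 2 ^ (2 * (k + 1) * (a + b + 1) ^ 2)
  set ε : ℝ := (2 ^ (a + b + 1))⁻¹
  -- chosen so that `(ε / 2) ^ k * m = 2 * N`: even after halving `T`, both sides of the pair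
  -- keep the size `N` that the induction hypotheses need
  set m := 2 ^ ((a + b + 2) * k + 2 * (k + 1) * (a + b + 1) ^ 2 + 1)
  have hε₀ : 0 < ε := by positivity
  have hε₁ : ε ≤ 1 := inv_le_one_of_one_le₀ (one_le_pow₀ one_le_two)
  have hkm : k * m ≤ #U := by
    refine le_trans ?_ hU
    calc k * m ≤ 2 ^ k * m := Nat.mul_le_mul_right _ Nat.lt_two_pow_self.le
      _ ≤ _ := by
        rw [← pow_add]
        exact Nat.pow_le_pow_right two_pos (by nlinarith)
  have hμ : (ε / 2) ^ k * m = 2 * N := by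
    have hε2 : ε / 2 = (2 ^ (a + b + 2))⁻¹ := by rw [pow_succ, mul_inv, div_eq_mul_inv]
    rw [hε2, inv_pow, ← pow_mul]
    simp only [m, N]
    push_cast
    rw [pow_add, pow_add]
    field_simp
  have hεpow : ∀ c ≤ a + b, ε * 2 ^ (c + 1) ≤ 1 := fun c hc => by
    rw [inv_mul_le_iff₀ (by positivity), mul_one]
    exact pow_le_pow_right₀ one_le_two (by omega)
  obtain ⟨S, hSU, T, hTU, hST, hS, hT, hsp⟩ :=
    hasSparseOrDensePair_of_free hfree hε₀ hε₁ (by positivity) hkm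
  rw [hμ] at hS hT
  have hNS : N ≤ #S := by exact_mod_cast (by linarith : (N : ℝ) ≤ #S)
  have hNT : ∀ T' ⊆ T, #T ≤ 2 * #T' → N ≤ #T' := fun T' _ hT' => by
    have : (#T : ℝ) ≤ 2 * #T' := by exact_mod_cast hT'
    exact_mod_cast (by linarith : (N : ℝ) ≤ #T')
  rcases hsp with hsp | hsp
  · exact (HasIndepOrClique.succ_of_isSparseTo hST (hεpow a (by omega)) hsp (ihS S hNS)
      fun T' hT'T hT' => ihS T' (hNT T' hT'T hT')).mono (union_subset hSU hTU)
  · exact hasIndepOrClique_compl.mp ((HasIndepOrClique.succ_of_isSparseTo hST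
      (hεpow b (by omega)) hsp
      (hasIndepOrClique_compl.mpr (ihT S hNS)) fun T' hT'T hT' =>
        hasIndepOrClique_compl.mpr (ihT T' (hNT T' hT'T hT'))).mono (union_subset hSU hTU))

theorem hasIndepOrClique_of_free (hfree : ¬Nonempty (H ↪g G)) (a b : ℕ) {U : Finset V}
    (hU : 2 ^ (2 * (k + 1) * (a + b) ^ 2) ≤ #U) : G.HasIndepOrClique a b U := by
  have hne : ∀ {U : Finset V} {e : ℕ}, 2 ^ e ≤ #U → U.Nonempty := fun h =>
    card_pos.mp ((Nat.two_pow_pos _).trans_le h)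
  induction a generalizing b U with
  | zero => exact hasIndepOrClique_zero_left (hne hU)
  | succ a iha =>
    induction b generalizing U with
    | zero => exact hasIndepOrClique_compl.mp (hasIndepOrClique_zero_left (hne hU))
    | succ b ihb =>
      refine hasIndepOrClique_succ_succ hfree (by convert hU using 4; ring)
        (fun U' hU' => iha (b + 1) (by convert hU' using 4; ring))
        (fun U' hU' => ihb (by convert hU' using 4; ring))

variable [Fintype V] [Nonempty V]

variable (G) in
theorem exists_pow_le_max_cliqueNum_and_sqrt_logb_card_le (hfree : ¬Nonempty (H ↪g G)) :
    ∃ ℓ : ℕ, 2 ^ ℓ ≤ max Gᶜ.cliqueNum G.cliqueNum ∧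
      √(Real.logb 2 (Fintype.card V)) ≤ 8 * (k + 1) * ℓ := by
  set M := max Gᶜ.cliqueNum G.cliqueNum
  have hM : M ≠ 0 := by
    have := (one_le_cliqueNum G).trans (le_max_right Gᶜ.cliqueNum _)
    omega
  refine ⟨Nat.log 2 M, Nat.pow_log_le_self 2 hM, ?_⟩
  rcases subsingleton_or_nontrivial V with hV | hV
  · have hV1 : Fintype.card V = 1 :=
      le_antisymm (Fintype.card_le_one_iff_subsingleton.mpr hV) Fintype.card_pos
    simp only [hV1, Nat.cast_one, Real.logb_one, Real.sqrt_zero]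
    positivity
  set ℓ := Nat.log 2 M
  have hℓ : 1 ≤ ℓ := Nat.le_log_of_pow_le one_lt_two (two_le_max_cliqueNum G)
  have hcard : Fintype.card V < 2 ^ (2 * (k + 1) * (ℓ + 1 + (ℓ + 1)) ^ 2) := by
    by_contra! hV
    have hMℓ : M < 2 ^ (ℓ + 1) := Nat.lt_pow_succ_log_self one_lt_two M
    exact not_hasIndepOrClique G ((le_max_left _ _).trans_lt hMℓ) ((le_max_right _ _).trans_lt hMℓ)
      (hasIndepOrClique_of_free hfree (ℓ + 1) (ℓ + 1) (U := univ) (by simpa using hV))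
  have hexp : 2 * (k + 1) * (ℓ + 1 + (ℓ + 1)) ^ 2 ≤ (8 * (k + 1) * ℓ) ^ 2 :=
    calc 2 * (k + 1) * (ℓ + 1 + (ℓ + 1)) ^ 2 ≤ 2 * (k + 1) * (4 * ℓ) ^ 2 := by gcongr; omega
      _ ≤ (8 * (k + 1) * ℓ) ^ 2 := by nlinarith
  rw [Real.sqrt_le_left (by positivity)]
  calc Real.logb 2 (Fintype.card V) ≤ (2 * (k + 1) * (ℓ + 1 + (ℓ + 1)) ^ 2 : ℕ) := by
        refine ((Real.logb_lt_iff_lt_rpow one_lt_two (by positivity)).mpr ?_).le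
        rw [Real.rpow_natCast]
        exact_mod_cast hcard
    _ ≤ (8 * (k + 1) * ℓ) ^ 2 := by exact_mod_cast hexp

end Free

end SimpleGraph

open SimpleGraph in
/-- For every graph `H` there is `c > 0` such that every `H`-free graph `G` on `n > 0`
vertices satisfies `max (α G) (ω G) ≥ 2 ^ (c√(log n))` (logs base 2). -/
theorem erdos_hajnal_general_bound (h : ℕ) (H : SimpleGraph (Fin h)) :
    ∃ c : ℝ, 0 < c ∧
      ∀ (n : ℕ) (G : SimpleGraph (Fin n)), 0 < n → ¬ Nonempty (H ↪g G) →
        (2 : ℝ) ^ (c * Real.sqrt (Real.logb 2 n)) ≤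
          (max (Gᶜ.cliqueNum) (G.cliqueNum) : ℝ) := by
  refine ⟨1 / (8 * (h + 1)), by positivity, fun n G hn hfree => ?_⟩
  have : Nonempty (Fin n) := ⟨⟨0, hn⟩⟩
  obtain ⟨ℓ, hℓM, hℓ⟩ := G.exists_pow_le_max_cliqueNum_and_sqrt_logb_card_le hfree
  rw [Fintype.card_fin] at hℓ
  calc (2 : ℝ) ^ (1 / (8 * (h + 1)) * √(Real.logb 2 n)) ≤ 2 ^ (ℓ : ℝ) := by
        refine Real.rpow_le_rpow_of_exponent_le one_le_two ?_
        rw [one_div, inv_mul_le_iff₀ (by positivity)]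
        exact hℓ
    _ ≤ _ := by
        rw [Real.rpow_natCast]
        exact_mod_cast hℓM
end

section
/- For every graph H and every real d > 0 there exists δ > 0 such that for every H-free graph G there exists a subset X ⊆ V(G) with |X| ≥ δ·|V(G)| such that either every vertex of the induced subgraph G[X] has degree at most d·|X| in G[X], or every vertex of the induced subgraph of the complement graph of G on X has degree at most d·|X| in that subgraph. -/
/-!
Regularize `G` with `ε` tiny compared with `d` and `H`, and discard the parts that lie in many
irregular pairs, so that `4 ^ (3 q)` parts remain that are pairwise `ε`-regular. Color each pair
of them by whether its density in `G` is at most `σ`, its density in `Gᶜ` is at most `σ`, or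
neither; Ramsey's theorem gives `q` parts whose pairs all have the same color. In the last case
the embedding lemma finds an induced copy of `H` with one vertex in each of `h` of these parts,
which is excluded. In the first case the union of the parts spans few edges, and discarding the
vertices of more than twice the average degree leaves half of it with every degree at most
`d` times its size; the second case is the first one for `Gᶜ`.
-/

open Finset SimpleGraph

namespace Finset

variable {α κ : Type*} [Fintype κ] [Nonempty κ]

theorem exists_color_chain (c : α → α → κ) (L : ℕ) {V : Finset α}
    (hV : (Fintype.card κ + 1) ^ L ≤ #V) :
    ∃ (x : Fin L → α) (col : Fin L → κ), Function.Injective x ∧ (∀ i, x i ∈ V) ∧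
      ∀ i j, i < j → c (x i) (x j) = col i := by
  classical
  induction L generalizing V with
  | zero => exact ⟨Fin.elim0, Fin.elim0, fun i => i.elim0, fun i => i.elim0, fun i => i.elim0⟩
  | succ L ih =>
    obtain ⟨a, ha⟩ : V.Nonempty := card_pos.1 (lt_of_lt_of_le (by positivity) hV)
    -- some color class of the edges at `a` is large enough to recurse into
    obtain ⟨col₀, -, hcol₀⟩ := exists_le_card_fiber_of_mul_le_card_of_maps_to
      (s := V.erase a) (f := c a) (n := (Fintype.card κ + 1) ^ L)
      (fun _ _ => mem_univ _) univ_nonempty (by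
        rw [card_univ, card_erase_of_mem ha]
        have hpos : 0 < (Fintype.card κ + 1) ^ L := by positivity
        have : (Fintype.card κ + 1) ^ (L + 1) =
            Fintype.card κ * (Fintype.card κ + 1) ^ L + (Fintype.card κ + 1) ^ L := by ring
        omega)
    obtain ⟨x, col, hinj, hmem, hmono⟩ := ih hcol₀
    have hx : ∀ i, x i ∈ V.erase a ∧ c a (x i) = col₀ := fun i => mem_filter.1 (hmem i)
    refine ⟨Fin.cons a x, Fin.cons col₀ col, ?_, ?_, ?_⟩
    · exact Fin.cons_injective_iff.2 ⟨fun ⟨i, hi⟩ => notMem_erase a V (hi ▸ (hx i).1), hinj⟩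
    · exact Fin.cases ha fun i => mem_of_mem_erase (hx i).1
    · intro i j hij
      induction j using Fin.cases with
      | zero => exact absurd hij (Fin.not_lt_zero _)
      | succ j =>
        induction i using Fin.cases with
        | zero => simpa using (hx j).2
        | succ i => simpa using hmono i j (Fin.succ_lt_succ_iff.1 hij)

theorem exists_monochromatic_subset (c : α → α → κ) (hc : ∀ x y, c x y = c y x) (q : ℕ)
    {V : Finset α} (hV : (Fintype.card κ + 1) ^ (Fintype.card κ * q) ≤ #V) :
    ∃ S ⊆ V, #S = q ∧ ∃ i, (S : Set α).Pairwise fun x y => c x y = i := by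
  classical
  obtain ⟨x, col, hinj, hmem, hmono⟩ := exists_color_chain c _ hV
  obtain ⟨i, -, hi⟩ := exists_le_card_fiber_of_mul_le_card_of_maps_to
    (s := univ) (f := col) (n := q) (fun _ _ => mem_univ _) univ_nonempty (by simp)
  obtain ⟨J, hJ, hJq⟩ := exists_subset_card_eq hi
  refine ⟨J.map ⟨x, hinj⟩, fun _ hy => ?_, by simpa using hJq, i, ?_⟩
  · obtain ⟨j, -, rfl⟩ := mem_map.1 hy
    exact hmem j
  · have hcol : ∀ j ∈ J, col j = i := fun j hj => (mem_filter.1 (hJ hj)).2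
    simp only [coe_map, Function.Embedding.coeFn_mk]
    rintro _ ⟨j, hj, rfl⟩ _ ⟨k, hk, rfl⟩ hne
    rcases lt_or_gt_of_ne (ne_of_apply_ne x hne) with hjk | hkj
    · rw [hmono j k hjk, hcol j hj]
    · rw [hc, hmono k j hkj, hcol k hk]

theorem exists_half_forall_le_twice_average {ι : Type*} (s : Finset ι) (f : ι → ℕ) :
    ∃ t ⊆ s, #s ≤ 2 * #t ∧ ∀ x ∈ t, #s * f x ≤ 2 * ∑ y ∈ s, f y := by
  set S := ∑ y ∈ s, f y
  refine ⟨{x ∈ s | #s * f x ≤ 2 * S}, filter_subset _ _, ?_, fun x hx => (mem_filter.1 hx).2⟩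
  have hsplit := card_filter_add_card_filter_not (s := s) (fun x => #s * f x ≤ 2 * S)
  set u := {x ∈ s | ¬#s * f x ≤ 2 * S}
  suffices 2 * #u ≤ #s by omega
  rcases u.eq_empty_or_nonempty with hu | hu
  · simp [hu]
  have : #u * (2 * S) < #s * S := calc
    #u * (2 * S) = ∑ _x ∈ u, 2 * S := by rw [sum_const, smul_eq_mul]
    _ < ∑ x ∈ u, #s * f x := sum_lt_sum_of_nonempty hu fun x hx => not_le.1 (mem_filter.1 hx).2
    _ ≤ ∑ x ∈ s, #s * f x := sum_le_sum_of_subset (filter_subset _ _)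
    _ = #s * S := (mul_sum _ _ _).symm
  exact (Nat.lt_of_mul_lt_mul_right (a := S) (by linarith)).le

theorem exists_subset_card_eq_pairwise [DecidableEq α] {r : α → α → Prop} [DecidableRel r] [Std.Symm r]
    {s : Finset α} {D : ℕ} (hs : ∀ x ∈ s, #{y ∈ s | y ≠ x ∧ ¬r x y} ≤ D) (k : ℕ)
    (hk : k * (D + 1) ≤ #s) : ∃ t ⊆ s, #t = k ∧ (t : Set α).Pairwise r := by
  induction k generalizing s with
  | zero => exact ⟨∅, empty_subset _, card_empty, by simp⟩
  | succ k ih =>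
    obtain ⟨x, hx⟩ : s.Nonempty := card_pos.1 (lt_of_lt_of_le (by positivity) hk)
    set s' := {y ∈ s | y ≠ x ∧ r x y}
    have hs' : s' ⊆ s := filter_subset _ _
    have hcard : #s ≤ #s' + (D + 1) := by
      have hsplit : #s' + #{y ∈ s | ¬(y ≠ x ∧ r x y)} = #s := card_filter_add_card_filter_not _
      have hrest : {y ∈ s | ¬(y ≠ x ∧ r x y)} ⊆ insert x {y ∈ s | y ≠ x ∧ ¬r x y} := by
        intro y hy
        rw [mem_insert, mem_filter]
        rw [mem_filter, not_and_or, not_not] at hy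
        tauto
      have := (card_le_card hrest).trans (card_insert_le _ _)
      have := hs x hx
      omega
    obtain ⟨t, ht, htk, hpair⟩ := ih (fun y hy => (card_le_card (monotone_filter_left _ hs')).trans
      (hs y (hs' hy))) (by rw [add_one_mul] at hk; omega)
    have hxt : x ∉ t := fun h => (mem_filter.1 (ht h)).2.1 rfl
    refine ⟨insert x t, insert_subset hx (ht.trans hs'), by rw [card_insert_of_notMem hxt, htk], ?_⟩
    rw [coe_insert, Set.pairwise_insert_of_symm]
    exact ⟨hpair, fun y hy _ => (mem_filter.1 (ht hy)).2.2⟩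

end Finset

namespace SimpleGraph

variable {α : Type*} (G : SimpleGraph α) [DecidableRel G.Adj]

theorem card_interedges_eq_sum (s t : Finset α) :
    #(G.interedges s t) = ∑ x ∈ s, #{y ∈ t | G.Adj x y} := by
  simp only [interedges_def, card_filter, sum_product]

theorem card_interedges_eq_edgeDensity_mul (s t : Finset α) :
    (#(G.interedges s t) : ℝ) = G.edgeDensity s t * (#s * #t) := by
  rw [← card_interedges_div_card]
  rcases eq_or_ne (#s * #t) 0 with h | h
  · have := G.card_interedges_le_mul s t
    rw [h, Nat.le_zero] at this
    simp [this]
  · push_cast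
    rw [div_mul_cancel₀]
    exact_mod_cast h

variable {G}

theorem IsUniform.compl {𝕜 : Type*} [Field 𝕜] [LinearOrder 𝕜] [IsStrictOrderedRing 𝕜]
    [DecidableEq α] {ε : 𝕜} {s t : Finset α} (hst : Disjoint s t) (h : G.IsUniform ε s t) :
    Gᶜ.IsUniform ε s t := by
  intro s' hs' t' ht' hss' htt'
  have hε := h.pos
  rcases s'.eq_empty_or_nonempty with rfl | hs'ne
  · have : s = ∅ :=
      card_eq_zero.1 (Nat.cast_nonpos.1 (nonpos_of_mul_nonpos_left (by simpa using hss') hε))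
    simpa [this] using hε
  rcases t'.eq_empty_or_nonempty with rfl | ht'ne
  · have : t = ∅ :=
      card_eq_zero.1 (Nat.cast_nonpos.1 (nonpos_of_mul_nonpos_left (by simpa using htt') hε))
    simpa [this] using hε
  have hcompl := G.edgeDensity_add_edgeDensity_compl (hs'ne.mono hs') (ht'ne.mono ht') hst
  have hcompl' := G.edgeDensity_add_edgeDensity_compl hs'ne ht'ne
    (hst.mono hs' ht')
  rw [← sub_eq_of_eq_add' hcompl.symm, ← sub_eq_of_eq_add' hcompl'.symm, abs_sub_comm]
  convert h hs' ht' hss' htt' using 2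
  push_cast
  ring

theorem card_interedges_biUnion_le [DecidableEq α] {ι : Type*} {I : Finset ι} {W : ι → Finset α}
    (hW : (I : Set ι).PairwiseDisjoint W) {a σ : ℝ} (ha : ∀ i ∈ I, #(W i) ≤ a) (hσ : 0 ≤ σ)
    (hdens : (I : Set ι).Pairwise fun i j => G.edgeDensity (W i) (W j) ≤ σ) :
    (#(G.interedges (I.biUnion W) (I.biUnion W)) : ℝ) ≤
      a * #(I.biUnion W) + σ * #(I.biUnion W) ^ 2 := by
  classical
  have hterm : ∀ p ∈ I ×ˢ I, (#(G.interedges (W p.1) (W p.2)) : ℝ) ≤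
      (if p.1 = p.2 then a * #(W p.1) else 0) + σ * (#(W p.1) * #(W p.2)) := by
    rintro ⟨i, j⟩ hij
    obtain ⟨hi, hj⟩ := mem_product.1 hij
    dsimp only
    split_ifs with h
    · subst h
      have : (#(G.interedges (W i) (W i)) : ℝ) ≤ #(W i) * #(W i) :=
        mod_cast G.card_interedges_le_mul _ _
      have := ha i hi
      nlinarith [sq_nonneg (#(W i) : ℝ)]
    · rw [zero_add, G.card_interedges_eq_edgeDensity_mul]
      gcongr
      exact hdens hi hj h
  have hX : (#(I.biUnion W) : ℝ) = ∑ i ∈ I, (#(W i) : ℝ) := by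
    rw [card_biUnion hW]
    push_cast
    rfl
  calc (#(G.interedges (I.biUnion W) (I.biUnion W)) : ℝ)
      ≤ ∑ p ∈ I ×ˢ I, (#(G.interedges (W p.1) (W p.2)) : ℝ) := by
        rw [interedges_biUnion]
        exact_mod_cast card_biUnion_le
    _ ≤ ∑ p ∈ I ×ˢ I, ((if p.1 = p.2 then a * #(W p.1) else 0) + σ * (#(W p.1) * #(W p.2))) :=
        sum_le_sum hterm
    _ = a * #(I.biUnion W) + σ * #(I.biUnion W) ^ 2 := by
        rw [sum_add_distrib, sum_product, sum_product, hX, sq, sum_mul_sum]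
        simp [mul_sum]

variable (G) in
def IsSparseOn (d : ℝ) (X : Finset α) : Prop :=
  ∀ v ∈ X, (#{u ∈ X | G.Adj v u} : ℝ) ≤ d * #X

theorem isSparseOn_of_card_le_one {d : ℝ} (hd : 0 ≤ d) {X : Finset α} (hX : #X ≤ 1) :
    G.IsSparseOn d X := by
  intro v hv
  have : {u ∈ X | G.Adj v u} = ∅ := filter_eq_empty_iff.2 fun u hu huv =>
    huv.ne (card_le_one.1 hX v hv u hu)
  rw [this, card_empty, Nat.cast_zero]
  positivity

variable (G) in
theorem exists_card_le_mul_isSparseOn [Fintype α] {d : ℝ} (hd : 0 ≤ d) {M : ℕ}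
    (hM : Fintype.card α ≤ M) : ∃ X : Finset α, Fintype.card α ≤ M * #X ∧ G.IsSparseOn d X := by
  cases isEmpty_or_nonempty α with
  | inl _ => exact ⟨∅, by simp, isSparseOn_of_card_le_one hd (by simp)⟩
  | inr h => exact ⟨{h.some}, by simpa using hM, isSparseOn_of_card_le_one hd (by simp)⟩

variable (G) in
theorem exists_half_subset_degree_le (X : Finset α) :
    ∃ Y ⊆ X, #X ≤ 2 * #Y ∧ ∀ v ∈ Y, #X * #{u ∈ Y | G.Adj v u} ≤ 2 * #(G.interedges X X) := by
  obtain ⟨Y, hYX, hcard, hdeg⟩ :=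
    exists_half_forall_le_twice_average X fun v => #{u ∈ X | G.Adj v u}
  refine ⟨Y, hYX, hcard, fun v hv => ?_⟩
  rw [card_interedges_eq_sum]
  exact (Nat.mul_le_mul_left _ (card_le_card (monotone_filter_left _ hYX))).trans (hdeg v hv)

end SimpleGraph

namespace Finpartition.IsEquipartition

variable {α : Type*} [DecidableEq α] {A : Finset α} {P : Finpartition A}

theorem exists_isSparseOn (hP : P.IsEquipartition) (hPA : #P.parts ≤ #A)
    (G : SimpleGraph α) [DecidableRel G.Adj] {S : Finset (Finset α)} (hS : S ⊆ P.parts)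
    {d σ : ℝ} (hdS : 16 ≤ d * #S) (hσ : 0 ≤ σ) (hσd : σ ≤ d / 8)
    (hdens : (S : Set (Finset α)).Pairwise fun s t => G.edgeDensity s t ≤ σ) :
    ∃ Y : Finset α, #A ≤ 4 * #P.parts * #Y ∧ G.IsSparseOn d Y := by
  set m := #A / #P.parts
  set X := S.biUnion id
  have hSpos : 0 < #S := Nat.pos_of_ne_zero fun h => by norm_num [h] at hdS
  have ht : 0 < #P.parts := hSpos.trans_le (card_le_card hS)
  have hm : 1 ≤ m := (Nat.one_le_div_iff ht).2 hPA
  have hXm : #S * m ≤ #X := by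
    rw [card_biUnion ((P.disjoint).subset (coe_subset.2 hS))]
    exact card_nsmul_le_sum _ _ _ fun s hs => hP.average_le_card_part (hS hs)
  have he := G.card_interedges_biUnion_le ((P.disjoint).subset (coe_subset.2 hS)) (a := m + 1)
    (fun s hs => mod_cast hP.card_part_le_average_add_one (hS hs)) hσ hdens
  obtain ⟨Y, -, hXY, hdeg⟩ := G.exists_half_subset_degree_le X
  refine ⟨Y, ?_, fun v hv => ?_⟩
  · calc #A ≤ #P.parts * (m + 1) := (Nat.lt_mul_div_succ _ ht).le
      _ ≤ #P.parts * (2 * #X) := Nat.mul_le_mul_left _ (by nlinarith)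
      _ ≤ #P.parts * (4 * #Y) := Nat.mul_le_mul_left _ (by omega)
      _ = 4 * #P.parts * #Y := by ring
  have hd : 0 ≤ d := by nlinarith
  have hXpos : (0 : ℝ) < #X := mod_cast (show 0 < #X by nlinarith)
  have hXmR : (#S : ℝ) * m ≤ #X := mod_cast hXm
  have hXYR : (#X : ℝ) ≤ 2 * #Y := mod_cast hXY
  have hmR : (1 : ℝ) ≤ m := mod_cast hm
  have hdegR : (#X : ℝ) * #{u ∈ Y | G.Adj v u} ≤ #X * (2 * (m + 1) + 2 * σ * #X) := by
    have : (#X : ℝ) * #{u ∈ Y | G.Adj v u} ≤ 2 * #(G.interedges X X) := mod_cast hdeg v hv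
    linarith
  have h16 : (16 : ℝ) * m ≤ d * #X := by nlinarith
  have := le_of_mul_le_mul_left hdegR hXpos
  nlinarith

end Finpartition.IsEquipartition

namespace Finpartition

variable {α : Type*} [DecidableEq α] {A : Finset α} {P : Finpartition A}
  {G : SimpleGraph α} [DecidableRel G.Adj]

theorem card_nonUniforms_eq_sum (ε : ℝ) :
    #(P.nonUniforms G ε) = ∑ s ∈ P.parts, #{u ∈ P.parts | u ≠ s ∧ ¬G.IsUniform ε s u} := by
  have : P.nonUniforms G ε = {p ∈ P.parts ×ˢ P.parts | p.2 ≠ p.1 ∧ ¬G.IsUniform ε p.1 p.2} := by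
    ext ⟨u, v⟩
    simp only [mk_mem_nonUniforms, mem_filter, mem_product, ne_comm (a := v)]
    tauto
  rw [this, card_filter, sum_product]
  simp only [card_filter]

theorem IsUniform.exists_subset_pairwise_isUniform {ε : ℝ} (hP : P.IsUniform G ε) {R : ℕ}
    (hRε : 8 * R * ε ≤ 1) (hRP : 4 * R ≤ #P.parts) :
    ∃ T ⊆ P.parts, #T = R ∧ (T : Set (Finset α)).Pairwise (G.IsUniform ε) := by
  set t := #P.parts
  set N := #(P.nonUniforms G ε)
  obtain ⟨L, hL, htL, hLdeg⟩ := exists_half_forall_le_twice_average P.parts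
    fun s => #{u ∈ P.parts | u ≠ s ∧ ¬G.IsUniform ε s u}
  rw [← card_nonUniforms_eq_sum] at hLdeg
  -- half of the parts lie in at most `D ≤ 2 ε t` irregular pairs; pick `R` of them greedily
  set D := 2 * N / t
  rcases Nat.eq_zero_or_pos t with ht | ht
  · exact ⟨∅, empty_subset _, by rw [card_empty]; omega, by simp⟩
  have hDt : (D : ℝ) * t ≤ 2 * t * (t - 1) * ε := by
    have hP' : (N : ℝ) ≤ t * (t - 1) * ε := by
      rwa [IsUniform, Nat.cast_mul, Nat.cast_sub ht, Nat.cast_one] at hP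
    have : D * t ≤ 2 * N := Nat.div_mul_le_self _ _
    have : (D : ℝ) * t ≤ 2 * N := mod_cast this
    linarith
  have htR : (1 : ℝ) ≤ t := mod_cast ht
  have h4RD : (4 * R * D : ℝ) ≤ t - 1 := by
    have hD : (D : ℝ) ≤ 2 * (t - 1) * ε :=
      le_of_mul_le_mul_right (a := (t : ℝ)) (by linarith) (by linarith)
    have hR : (0 : ℝ) ≤ R := R.cast_nonneg
    nlinarith
  have h4RD' : 4 * R * D < t := by exact_mod_cast (show (4 * R * D : ℝ) < t by linarith)
  obtain ⟨T, hTL, hTR, hT⟩ := exists_subset_card_eq_pairwise (r := G.IsUniform ε) (s := L)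
    (D := D) (fun s hs => (card_le_card (monotone_filter_left _ hL)).trans
      ((Nat.le_div_iff_mul_le ht).2 (by rw [mul_comm]; exact hLdeg s hs))) R
    (by nlinarith)
  exact ⟨T, hTL.trans hL, hTR, hT⟩

end Finpartition

namespace SimpleGraph

variable {α : Type*}

theorem IsUniform.card_filter_card_adj_lt_le {G : SimpleGraph α} [DecidableRel G.Adj] {ε : ℝ}
    {s t A B : Finset α} (hU : G.IsUniform ε s t) (hA : A ⊆ s) (hB : B ⊆ t)
    (hBt : #t * ε ≤ #B) :
    (#{x ∈ A | #{y ∈ B | G.Adj x y} < (G.edgeDensity s t - ε) * #B} : ℝ) ≤ #s * ε := by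
  set X := {x ∈ A | #{y ∈ B | G.Adj x y} < (G.edgeDensity s t - ε) * #B}
  by_contra! hX
  have hXne : X.Nonempty :=
    card_pos.1 (Nat.cast_pos.1 ((mul_nonneg (Nat.cast_nonneg _) hU.pos.le).trans_lt hX))
  have hlt : (#(G.interedges X B) : ℝ) < (G.edgeDensity s t - ε) * #B * #X := by
    rw [card_interedges_eq_sum, Nat.cast_sum, mul_comm, ← nsmul_eq_mul, ← sum_const]
    exact sum_lt_sum_of_nonempty hXne fun x hx => (mem_filter.1 hx).2
  rw [card_interedges_eq_edgeDensity_mul] at hlt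
  have hu := abs_lt.1 (hU ((filter_subset _ _).trans hA) hB hX.le hBt)
  have hB0 : (0 : ℝ) < #B := by
    by_contra! h
    rw [le_antisymm h (Nat.cast_nonneg _)] at hlt
    simp at hlt
  have hX0 : (0 : ℝ) < #X := mod_cast hXne.card_pos
  nlinarith [mul_pos hX0 hB0]

theorem exists_mem_forall_le_card_adj {ι : Type*} [Fintype ι] (K : ι → SimpleGraph α)
    [∀ j, DecidableRel (K j).Adj] {ε : ℝ} {s A : Finset α} {t B : ι → Finset α} (hA : A ⊆ s)
    (hB : ∀ j, B j ⊆ t j) (hBt : ∀ j, #(t j) * ε ≤ #(B j))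
    (hU : ∀ j, (K j).IsUniform ε s (t j)) (hAcard : Fintype.card ι * (#s * ε) < #A) :
    ∃ x ∈ A, ∀ j, ((K j).edgeDensity s (t j) - ε) * #(B j) ≤ #{y ∈ B j | (K j).Adj x y} := by
  classical
  set bad := univ.biUnion fun j =>
    {x ∈ A | #{y ∈ B j | (K j).Adj x y} < ((K j).edgeDensity s (t j) - ε) * #(B j)}
  have hbad : (#bad : ℝ) < #A := calc
    (#bad : ℝ) ≤ ∑ j, (#{x ∈ A | #{y ∈ B j | (K j).Adj x y} <
        ((K j).edgeDensity s (t j) - ε) * #(B j)} : ℝ) := mod_cast card_biUnion_le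
    _ ≤ ∑ _j : ι, (#s * ε : ℝ) :=
        sum_le_sum fun j _ => (hU j).card_filter_card_adj_lt_le hA (hB j) (hBt j)
    _ < #A := by simpa using hAcard
  obtain ⟨x, hxA, hxbad⟩ := exists_mem_notMem_of_card_lt_card (mod_cast hbad : #bad < #A)
  refine ⟨x, hxA, fun j => not_lt.1 fun hlt => hxbad ?_⟩
  exact mem_biUnion.2 ⟨j, mem_univ _, mem_filter.2 ⟨hxA, hlt⟩⟩

/- Pick `v 0 ∈ C 0` with many `K 0 j`-neighbours in every `C j`, shrink each `C j` to these
neighbours and recurse. Uniformity is only ever applied to subsets of the original `W i`, which is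
why the candidate sets must keep a fraction `c ≥ ε` of them. -/
theorem exists_forall_adj_of_isUniform {ε σ : ℝ} (hε : 0 < ε) (hσ : σ ≤ 1) (hεσ : ε ≤ σ / 2)
    (h : ℕ) (K : Fin h → Fin h → SimpleGraph α) [∀ i j, DecidableRel (K i j).Adj]
    (W C : Fin h → Finset α) (c : ℝ) (hW : ∀ i, (W i).Nonempty)
    (hK : ∀ i j, i < j → (K i j).IsUniform ε (W i) (W j) ∧ σ ≤ (K i j).edgeDensity (W i) (W j))
    (hCW : ∀ i, C i ⊆ W i) (hC : ∀ i, c * #(W i) ≤ #(C i)) (hc : h * ε < c * (σ / 2) ^ h) :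
    ∃ v : Fin h → α, (∀ i, v i ∈ C i) ∧ ∀ i j, i < j → (K i j).Adj (v i) (v j) := by
  induction h generalizing c with
  | zero => exact ⟨Fin.elim0, fun i => i.elim0, fun i => i.elim0⟩
  | succ h ih =>
    have hσ2 : 0 < σ / 2 := by linarith
    have hpow : (σ / 2) ^ (h + 1) ≤ 1 := pow_le_one₀ hσ2.le (by linarith)
    have hcpos : 0 < c := pos_of_mul_pos_left ((by positivity : (0 : ℝ) < (h + 1) * ε).trans
      (by exact_mod_cast hc)) (by positivity)
    have hcε : ε ≤ c := by push_cast at hc; nlinarith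
    have hCε : ∀ j, #(W j) * ε ≤ #(C j) := fun j =>
      (mul_comm (#(W j) : ℝ) ε ▸ mul_le_mul_of_nonneg_right hcε (Nat.cast_nonneg _)).trans (hC j)
    have hC0 : (Fintype.card (Fin h) : ℝ) * (#(W 0) * ε) < #(C 0) := by
      have hW0 : (0 : ℝ) < #(W 0) := mod_cast (hW 0).card_pos
      have hhc : (h : ℝ) * ε < c := by push_cast at hc; nlinarith
      rw [Fintype.card_fin]
      nlinarith [mul_lt_mul_of_pos_right hhc hW0, hC 0]
    obtain ⟨x, hxC, hx⟩ := exists_mem_forall_le_card_adj (ι := Fin h) (fun j => K 0 j.succ)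
      (hCW 0) (t := fun j => W j.succ) (B := fun j => C j.succ) (fun j => hCW j.succ)
      (fun j => hCε j.succ) (fun j => (hK 0 j.succ (Fin.succ_pos j)).1) hC0
    set C' := fun j : Fin h => {y ∈ C j.succ | (K 0 j.succ).Adj x y}
    obtain ⟨v, hvC, hvK⟩ := ih (fun i j => K i.succ j.succ) (fun j => W j.succ) C' (c * (σ / 2))
      (fun i => hW _) (fun i j hij => hK _ _ (Fin.succ_lt_succ_iff.2 hij))
      (fun j => (filter_subset _ _).trans (hCW _)) (fun j => by
        have h1 := hx j
        have h2 := (hK 0 j.succ (Fin.succ_pos j)).2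
        have h3 := hC j.succ
        nlinarith) (by push_cast at hc ⊢; rw [pow_succ] at hc; nlinarith)
    refine ⟨Fin.cons x v, Fin.cases hxC fun j => (filter_subset _ _) (hvC j), ?_⟩
    intro i j hij
    induction j using Fin.cases with
    | zero => exact absurd hij (Fin.not_lt_zero _)
    | succ j =>
      induction i using Fin.cases with
      | zero => exact (mem_filter.1 (hvC j)).2
      | succ i => exact hvK i j (Fin.succ_lt_succ_iff.1 hij)

theorem nonempty_embedding_of_isUniform [DecidableEq α] {G : SimpleGraph α} [DecidableRel G.Adj]
    {h : ℕ} (H : SimpleGraph (Fin h)) (W : Fin h → Finset α) (hW : ∀ i, (W i).Nonempty)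
    {ε σ : ℝ} (hε : 0 < ε) (hσ : σ ≤ 1) (hεσ : ε ≤ σ / 2) (hεh : h * ε < (σ / 2) ^ h)
    (hG : ∀ i j, i ≠ j → G.IsUniform ε (W i) (W j) ∧ σ ≤ G.edgeDensity (W i) (W j))
    (hGc : ∀ i j, i ≠ j → Gᶜ.IsUniform ε (W i) (W j) ∧ σ ≤ Gᶜ.edgeDensity (W i) (W j)) :
    Nonempty (H ↪g G) := by
  classical
  obtain ⟨v, -, hv⟩ := exists_forall_adj_of_isUniform hε hσ hεσ h
    (fun i j => if H.Adj i j then G else Gᶜ) W W 1 hW (fun i j hij => by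
      split_ifs
      · convert hG i j hij.ne
      · convert hGc i j hij.ne) (fun _ => subset_rfl) (by simp) (by simpa using hεh)
  have hvH : ∀ i j, i < j → v i ≠ v j ∧ (G.Adj (v i) (v j) ↔ H.Adj i j) := by
    intro i j hij
    have := hv i j hij
    split_ifs at this with hH
    · exact ⟨this.ne, iff_of_true this hH⟩
    · exact ⟨this.ne, iff_of_false (compl_adj G _ _ |>.1 this).2 hH⟩
  have hvH' : ∀ i j, i ≠ j → v i ≠ v j ∧ (G.Adj (v i) (v j) ↔ H.Adj i j) := by
    intro i j hij
    rcases hij.lt_or_gt with hij | hij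
    · exact hvH i j hij
    · rw [G.adj_comm, H.adj_comm]
      exact ⟨(hvH j i hij).1.symm, (hvH j i hij).2⟩
  refine ⟨⟨⟨v, fun i j hij => by_contra fun hne => (hvH' i j hne).1 hij⟩, fun {i j} => ?_⟩⟩
  rcases eq_or_ne i j with rfl | hij
  · exact iff_of_false (G.irrefl) (H.irrefl)
  · exact (hvH' i j hij).2

section DensityColor

variable [DecidableEq α] (G : SimpleGraph α) [DecidableRel G.Adj]

noncomputable def densityColor (σ : ℝ) (s t : Finset α) : Fin 3 :=
  if G.edgeDensity s t ≤ σ then 0 else if Gᶜ.edgeDensity s t ≤ σ then 1 else 2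

theorem densityColor_comm (σ : ℝ) (s t : Finset α) :
    G.densityColor σ s t = G.densityColor σ t s := by
  rw [densityColor, densityColor, edgeDensity_comm, Gᶜ.edgeDensity_comm]

variable {G}

theorem edgeDensity_le_of_densityColor_eq_zero {σ : ℝ} {s t : Finset α}
    (h : G.densityColor σ s t = 0) : G.edgeDensity s t ≤ σ := by
  unfold densityColor at h
  split_ifs at h with h₁ <;> simp_all

theorem edgeDensity_compl_le_of_densityColor_eq_one {σ : ℝ} {s t : Finset α}
    (h : G.densityColor σ s t = 1) : Gᶜ.edgeDensity s t ≤ σ := by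
  unfold densityColor at h
  split_ifs at h with h₁ h₂ <;> simp_all

theorem lt_edgeDensity_of_densityColor_eq_two {σ : ℝ} {s t : Finset α}
    (h : G.densityColor σ s t = 2) : σ < G.edgeDensity s t ∧ σ < Gᶜ.edgeDensity s t := by
  unfold densityColor at h
  split_ifs at h with h₁ h₂ <;> simp_all

end DensityColor

end SimpleGraph

namespace Finpartition.IsEquipartition

variable {α : Type*} [DecidableEq α] {A : Finset α} {P : Finpartition A}

theorem exists_isSparseOn_or_nonempty_embedding (hP : P.IsEquipartition) (hPA : #P.parts ≤ #A)
    (G : SimpleGraph α) [DecidableRel G.Adj] {T : Finset (Finset α)} (hT : T ⊆ P.parts) {ε : ℝ}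
    (hTU : (T : Set (Finset α)).Pairwise (G.IsUniform ε)) {q : ℕ} (hTq : 4 ^ (3 * q) ≤ #T)
    {h : ℕ} (H : SimpleGraph (Fin h)) (hhq : h ≤ q) {d σ : ℝ} (hdq : 16 ≤ d * q)
    (hσd : σ ≤ d / 8) (hσ : σ ≤ 1) (hε : 0 < ε) (hεσ : ε ≤ σ / 2) (hεh : h * ε < (σ / 2) ^ h) :
    (∃ Y : Finset α, #A ≤ 4 * #P.parts * #Y ∧ (G.IsSparseOn d Y ∨ Gᶜ.IsSparseOn d Y)) ∨
      Nonempty (H ↪g G) := by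
  obtain ⟨S, hST, hSq, i, hS⟩ := exists_monochromatic_subset (G.densityColor σ)
    (G.densityColor_comm σ) q (by simpa using hTq)
  have hSP := hST.trans hT
  have hσ0 : 0 ≤ σ := by linarith
  have hdS : 16 ≤ d * #S := by rwa [hSq]
  fin_cases i
  · obtain ⟨Y, hY, hYs⟩ := hP.exists_isSparseOn hPA G hSP hdS hσ0 hσd
      fun s hs t ht hst => edgeDensity_le_of_densityColor_eq_zero (hS hs ht hst)
    exact .inl ⟨Y, hY, .inl hYs⟩
  · obtain ⟨Y, hY, hYs⟩ := hP.exists_isSparseOn hPA Gᶜ hSP hdS hσ0 hσd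
      fun s hs t ht hst => edgeDensity_compl_le_of_densityColor_eq_one (hS hs ht hst)
    exact .inl ⟨Y, hY, .inr hYs⟩
  · refine .inr ?_
    set W : Fin h → Finset α := fun i => S.equivFin.symm (Fin.castLE (hSq ▸ hhq) i)
    have hWS : ∀ i, W i ∈ S := fun i => (S.equivFin.symm _).2
    have hWinj : ∀ i j, i ≠ j → W i ≠ W j := fun i j hij hW =>
      hij (Fin.castLE_injective _ (S.equivFin.symm.injective (Subtype.ext hW)))
    have hWU : ∀ i j, i ≠ j → G.IsUniform ε (W i) (W j) := fun i j hij =>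
      hTU (hST (hWS i)) (hST (hWS j)) (hWinj i j hij)
    have hWdisj : ∀ i j, i ≠ j → Disjoint (W i) (W j) := fun i j hij =>
      P.disjoint (hSP (hWS i)) (hSP (hWS j)) (hWinj i j hij)
    have hWdens : ∀ i j, i ≠ j → σ < G.edgeDensity (W i) (W j) ∧ σ < Gᶜ.edgeDensity (W i) (W j) :=
      fun i j hij => lt_edgeDensity_of_densityColor_eq_two (hS (hWS i) (hWS j) (hWinj i j hij))
    exact nonempty_embedding_of_isUniform H W (fun i => P.nonempty_of_mem_parts (hSP (hWS i)))
      hε hσ hεσ hεh (fun i j hij => ⟨hWU i j hij, (hWdens i j hij).1.le⟩)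
      (fun i j hij => ⟨(hWU i j hij).compl (hWdisj i j hij), (hWdens i j hij).2.le⟩)

end Finpartition.IsEquipartition

theorem SimpleGraph.exists_isSparseOn_or_nonempty_embedding_of_bound_le {α : Type*} [Fintype α]
    [DecidableEq α] (G : SimpleGraph α) [DecidableRel G.Adj] {h : ℕ} (H : SimpleGraph (Fin h))
    {q : ℕ} (hhq : h ≤ q) {d σ ε : ℝ} (hdq : 16 ≤ d * q) (hσd : σ ≤ d / 8) (hσ : σ ≤ 1) (hε : 0 < ε)
    (hεσ : ε ≤ σ / 2) (hεh : h * ε < (σ / 2) ^ h) (hqε : 8 * 4 ^ (3 * q) * ε ≤ 1)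
    (hα : SzemerediRegularity.bound ε (4 * 4 ^ (3 * q)) ≤ Fintype.card α) :
    (∃ Y : Finset α, Fintype.card α ≤ 4 * SzemerediRegularity.bound ε (4 * 4 ^ (3 * q)) * #Y ∧
      (G.IsSparseOn d Y ∨ Gᶜ.IsSparseOn d Y)) ∨ Nonempty (H ↪g G) := by
  obtain ⟨P, hPeq, hPl, hPM, hPU⟩ := szemeredi_regularity G hε
    ((SzemerediRegularity.le_bound _ _).trans hα)
  obtain ⟨T, hTP, hTq, hTU⟩ := hPU.exists_subset_pairwise_isUniform (mod_cast hqε) hPl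
  refine (hPeq.exists_isSparseOn_or_nonempty_embedding (by simpa using hPM.trans hα) G hTP hTU
    hTq.ge H hhq hdq hσd hσ hε hεσ hεh).imp_left fun ⟨Y, hY, hYs⟩ => ⟨Y, ?_, hYs⟩
  simpa using hY.trans (Nat.mul_le_mul_right _ (Nat.mul_le_mul_left _ hPM))

theorem exists_rodl_parameters (h : ℕ) {d : ℝ} (hd : 0 < d) :
    ∃ (q : ℕ) (σ ε : ℝ), h ≤ q ∧ 16 ≤ d * q ∧ σ ≤ d / 8 ∧ σ ≤ 1 ∧ 0 < ε ∧ ε ≤ σ / 2 ∧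
      h * ε < (σ / 2) ^ h ∧ 8 * 4 ^ (3 * q) * ε ≤ 1 := by
  set q := max h ⌈16 / d⌉₊
  set σ := min (d / 8) 1
  have hσ : 0 < σ := lt_min (by positivity) one_pos
  set ε := min (min (σ / 2) ((σ / 2) ^ h / (h + 1))) (1 / (8 * 4 ^ (3 * q)))
  have hε : 0 < ε := by positivity
  refine ⟨q, σ, ε, le_max_left _ _, ?_, min_le_left _ _, min_le_right _ _, hε,
    (min_le_left _ _).trans (min_le_left _ _), ?_, ?_⟩
  · have := (div_le_iff₀' hd).1 ((Nat.le_ceil (16 / d)).trans (Nat.cast_le.2 (le_max_right h _)))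
    linarith
  · have := (le_div_iff₀ (by positivity)).1
      ((min_le_left _ _).trans (min_le_right _ _) : ε ≤ (σ / 2) ^ h / (h + 1))
    nlinarith
  · rw [mul_comm, ← le_div_iff₀ (by positivity)]
    exact min_le_right _ _

open scoped Classical

/-- Rödl's theorem: for every graph `H` and every `d > 0` there is `δ > 0` such that every
`H`-free graph `G` has a set `X` of at least `δ|V(G)|` vertices such that in one of `G[X]`
or the complement of `G` induced on `X`, every vertex has degree at most `d|X|`. -/
theorem rodl_theorem (h : ℕ) (H : SimpleGraph (Fin h)) (d : ℝ) (hd : 0 < d) :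
    ∃ δ : ℝ, 0 < δ ∧
      ∀ (n : ℕ) (G : SimpleGraph (Fin n)), ¬ Nonempty (H ↪g G) →
        ∃ X : Finset (Fin n), δ * n ≤ (X.card : ℝ) ∧
          ((∀ v ∈ X, ((X.filter (fun u => G.Adj v u)).card : ℝ) ≤ d * X.card) ∨
           (∀ v ∈ X, ((X.filter (fun u => Gᶜ.Adj v u)).card : ℝ) ≤ d * X.card)) := by
  obtain ⟨q, σ, ε, hhq, hdq, hσd, hσ, hε, hεσ, hεh, hqε⟩ := exists_rodl_parameters h hd
  set M := SzemerediRegularity.bound ε (4 * 4 ^ (3 * q))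
  have hM : 0 < M := SzemerediRegularity.bound_pos _ _
  refine ⟨1 / (4 * M), by positivity, fun n G hfree => ?_⟩
  obtain ⟨X, hXn, hX⟩ : ∃ X : Finset (Fin n), n ≤ 4 * M * #X ∧
      (G.IsSparseOn d X ∨ Gᶜ.IsSparseOn d X) := by
    rcases lt_or_ge n M with hn | hn
    · obtain ⟨X, hXn, hX⟩ := G.exists_card_le_mul_isSparseOn hd.le (M := M) (by simpa using hn.le)
      exact ⟨X, by simpa using hXn.trans (Nat.mul_le_mul_right _ (by omega)), .inl hX⟩
    · simpa using (G.exists_isSparseOn_or_nonempty_embedding_of_bound_le H hhq hdq hσd hσ hε hεσ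
        hεh hqε (by simpa using hn)).resolve_right hfree
  refine ⟨X, ?_, hX⟩
  rw [div_mul_eq_mul_div, one_mul, div_le_iff₀ (by positivity), mul_comm]
  exact_mod_cast hXn
end

section
/- For every integer n ≥ 2 and every real c with 0 < c ≤ 1/2 satisfying log n ≥ σ·log(1/c), either f(n) ≥ 1/(4c) or f(n) ≥ k·f(c^{2σ}·n), where k = ⌊(σ·log(1/c) − 1)/log(2/ε)⌋. -/
open SimpleGraph
open scoped Classical

/-- A cograph is a graph with no induced path on 4 vertices. -/
def IsCograph {V : Type} (G : SimpleGraph V) : Prop :=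
  ¬ Nonempty (pathGraph 4 ↪g G)

/-- `phi G` is the maximum number of vertices of an induced subgraph of `G`
that is a cograph. -/
noncomputable def phi {n : ℕ} (G : SimpleGraph (Fin n)) : ℕ :=
  sSup {k | ∃ s : Finset (Fin n), s.card = k ∧ IsCograph (G.induce (s : Set (Fin n)))}

/-- A class of graphs (one predicate for each number of vertices) is hereditary if it is
closed under isomorphic copies of induced subgraphs. -/
def Hereditary (I : ∀ n : ℕ, SimpleGraph (Fin n) → Prop) : Prop :=
  ∀ (m n : ℕ) (G : SimpleGraph (Fin n)) (H : SimpleGraph (Fin m)),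
    I n G → Nonempty (H ↪g G) → I m H

/-- `fI I x` is the minimum of `phi G` over graphs `G` in the class `I` with `⌈x⌉`
vertices. -/
noncomputable def fI (I : ∀ n : ℕ, SimpleGraph (Fin n) → Prop) (x : ℝ) : ℕ :=
  sInf {m | ∃ G : SimpleGraph (Fin ⌈x⌉₊), I ⌈x⌉₊ G ∧ phi G = m}

/-!
Let `G` be a graph of the class on `n` vertices with `phi G = f(n) < 1/(4c)`, and `x = c^(2σ) n`.
Applied to the current vertex set `S`, the hypothesis gives disjoint `A, B ⊆ S` with
`|A| ≥ c^σ |S|`, `|B| ≥ ε |S|` and a kind of pair (edges, or non-edges) of density at most `c`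
between them. By Markov's inequality half of `A` has at most `2c|B|` such neighbours in `B`; this
half has at least `x` vertices and so contains a cograph `X` with `|X| ≥ f(x)`. Since
`|X| ≤ phi G < 1/(4c)`, fewer than `|B|/2` vertices of `B` see `X` through an exceptional pair, and
the remaining set `S'`, of size at least `ε|S|/2`, is complete or anticomplete to `X`. No vertex
partition of `P₄` is homogeneous in this way, so `X` together with the cograph found inside `S'`
is again a cograph. The choice of `k` gives `(2/ε)^k · 2x ≤ c^σ n`, so the recursion runs for `k`
rounds and `phi G ≥ k f(x)`.
-/

open Finset

section Cograph

variable {V W : Type} {G : SimpleGraph V} {H : SimpleGraph W}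

lemma IsCograph.of_isIndContained (hHG : H ⊴ G) (hG : IsCograph G) : IsCograph H :=
  fun hP => hG (IsIndContained.trans hP hHG)

lemma SimpleGraph.Embedding.isIndContained_induce {s : Set V} (f : H ↪g G) (hf : ∀ w, f w ∈ s) :
    H ⊴ G.induce s :=
  ⟨⟨⟨fun w => ⟨f w, hf w⟩, fun _ _ h => f.injective (congrArg Subtype.val h)⟩, f.map_adj_iff⟩⟩

lemma IsCograph.induce_image (f : H ↪g G) {u : Set W} (hu : IsCograph (H.induce u)) :
    IsCograph (G.induce (f '' u)) := by
  have hrange : Set.range (f.comp (Embedding.induce u)) = f '' u := by ext; simp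
  rw [← hrange]
  exact hu.of_isIndContained (Embedding.isoInduceRange _).symm.isIndContained

lemma pathGraph_four_const_of_homogeneous_cut (p : Prop) (b : Fin 4 → Bool)
    (h : ∀ i j, b i → ¬ b j → ((pathGraph 4).Adj i j ↔ p)) : ∀ i, b i = b 0 := by
  simp only [pathGraph_adj] at h
  by_cases hp : p <;> simp only [hp, iff_true, iff_false] at h <;> revert b <;> decide

lemma IsCograph.induce_union {s t : Set V}
    (hs : IsCograph (G.induce s)) (ht : IsCograph (G.induce t)) (p : Prop)
    (hst : ∀ a ∈ s, ∀ b ∈ t, (G.Adj a b ↔ p)) : IsCograph (G.induce (s ∪ t)) := by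
  rintro ⟨e⟩
  set f := (Embedding.induce (s ∪ t)).comp e
  have hf : ∀ i, f i ∈ s ∨ f i ∈ t := fun i => (e i).2
  have hconst := pathGraph_four_const_of_homogeneous_cut p (fun i => decide (f i ∈ s)) <| by
    intro i j hi hj
    simp only [decide_eq_true_eq] at hi hj
    rw [← f.map_adj_iff]
    exact hst _ hi _ ((hf j).resolve_left hj)
  by_cases h0 : f 0 ∈ s
  · exact hs (f.isIndContained_induce fun i => by simpa [h0] using hconst i)
  · exact ht (f.isIndContained_induce fun i =>
      (hf i).resolve_left (by simpa [h0] using hconst i))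

end Cograph

section Phi

variable {n : ℕ} (G : SimpleGraph (Fin n))

lemma bddAbove_card_cograph :
    BddAbove {k | ∃ s : Finset (Fin n), #s = k ∧ IsCograph (G.induce (s : Set (Fin n)))} :=
  ⟨n, by rintro _ ⟨s, rfl, -⟩; simpa using s.card_le_univ⟩

lemma exists_cograph_card_eq_phi :
    ∃ s : Finset (Fin n), #s = phi G ∧ IsCograph (G.induce (s : Set (Fin n))) :=
  Nat.sSup_mem (by exact ⟨0, ∅, rfl, fun ⟨e⟩ => by simpa using (e 0).2⟩)
    (bddAbove_card_cograph G)

variable {G}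

lemma card_le_phi {s : Finset (Fin n)} (hs : IsCograph (G.induce (s : Set (Fin n)))) :
    #s ≤ phi G :=
  le_csSup (bddAbove_card_cograph G) ⟨s, rfl, hs⟩

variable (G)

lemma exists_cograph_subset_card_eq_phi_comap {t : Finset (Fin n)} {k : ℕ} (h : #t = k) :
    ∃ X ⊆ t, #X = phi (G.comap (t.orderEmbOfFin h)) ∧
      IsCograph (G.induce (X : Set (Fin n))) := by
  obtain ⟨u, hu, hcog⟩ := exists_cograph_card_eq_phi (G.comap (t.orderEmbOfFin h))
  let f := Embedding.comap (t.orderEmbOfFin h).toEmbedding G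
  refine ⟨u.map f.toEmbedding, ?_, by rw [card_map, hu], ?_⟩
  · intro v hv
    obtain ⟨i, -, rfl⟩ := mem_map.1 hv
    exact t.orderEmbOfFin_mem h i
  · rw [coe_map]
    exact hcog.induce_image f

lemma phi_comap_orderEmbOfFin_le {t : Finset (Fin n)} {k : ℕ} (h : #t = k) :
    phi (G.comap (t.orderEmbOfFin h)) ≤ phi G := by
  obtain ⟨X, -, hX, hcog⟩ := exists_cograph_subset_card_eq_phi_comap G h
  exact hX ▸ card_le_phi hcog

end Phi

section HereditaryClass

variable {I : ∀ n : ℕ, SimpleGraph (Fin n) → Prop}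

lemma Hereditary.comap (hI : Hereditary I) {m n : ℕ} {G : SimpleGraph (Fin n)} (hG : I n G)
    (f : Fin m ↪ Fin n) : I m (G.comap f) :=
  hI m n G _ hG ⟨Embedding.comap f G⟩

lemma fI_le_phi {x : ℝ} {G : SimpleGraph (Fin ⌈x⌉₊)} (hG : I ⌈x⌉₊ G) : fI I x ≤ phi G :=
  Nat.sInf_le ⟨G, hG, rfl⟩

lemma exists_phi_eq_fI (hall : ∀ m : ℕ, ∃ G : SimpleGraph (Fin m), I m G) (n : ℕ) :
    ∃ G : SimpleGraph (Fin n), I n G ∧ phi G = fI I n := by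
  obtain ⟨G, hG⟩ := hall n
  have hne : {m | ∃ G : SimpleGraph (Fin n), I n G ∧ phi G = m}.Nonempty := ⟨_, G, hG, rfl⟩
  have hfI : fI I n = sInf {m | ∃ G : SimpleGraph (Fin n), I n G ∧ phi G = m} := by
    rw [fI, Nat.ceil_natCast]
  exact hfI ▸ Nat.sInf_mem hne

lemma Hereditary.exists_cograph_subset_fI_le (hI : Hereditary I) {n : ℕ}
    {G : SimpleGraph (Fin n)} (hG : I n G) {t : Finset (Fin n)} {x : ℝ} (ht : #t = ⌈x⌉₊) :
    ∃ X ⊆ t, fI I x ≤ #X ∧ IsCograph (G.induce (X : Set (Fin n))) := by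
  obtain ⟨X, hXt, hX, hcog⟩ := exists_cograph_subset_card_eq_phi_comap G ht
  exact ⟨X, hXt, hX ▸ fI_le_phi (hI.comap hG _), hcog⟩

end HereditaryClass

section Counting

variable {α β : Type*} {r : α → β → Prop} [∀ a, DecidablePred (r a)]

variable (r) in
lemma Rel.card_interedges_eq_sum (A : Finset α) (B : Finset β) :
    #(Rel.interedges r A B) = ∑ a ∈ A, #{b ∈ B | r a b} := by
  simp only [Rel.interedges, card_filter, sum_product]

lemma card_le_two_mul_card_filter_of_card_interedges_le {A : Finset α} {B : Finset β} {c : ℝ}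
    (hc : 0 < c) (h : (#(Rel.interedges r A B) : ℝ) ≤ c * #A * #B) :
    (#A : ℝ) ≤ 2 * #{a ∈ A | (#{b ∈ B | r a b} : ℝ) ≤ 2 * c * #B} := by
  rcases B.eq_empty_or_nonempty with rfl | hB
  · simp only [filter_empty, card_empty, Nat.cast_zero, mul_zero, le_refl, filter_true]
    linarith [(#A).cast_nonneg (α := ℝ)]
  set deg : α → ℝ := fun a => #{b ∈ B | r a b}
  have hsplit := card_filter_add_card_filter_not (s := A) (fun a => deg a ≤ 2 * c * #B)
  have hbad : (#{a ∈ A | ¬ deg a ≤ 2 * c * #B} : ℝ) * (2 * c * #B) ≤ c * #A * #B :=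
    calc _ ≤ ∑ a ∈ A with ¬ deg a ≤ 2 * c * #B, deg a := by
          rw [← nsmul_eq_mul]
          exact card_nsmul_le_sum _ _ _ fun a ha => (not_le.1 (mem_filter.1 ha).2).le
      _ ≤ ∑ a ∈ A, deg a :=
          sum_le_sum_of_subset_of_nonneg (filter_subset _ _) fun _ _ _ => by positivity
      _ = #(Rel.interedges r A B) := by simp [deg, Rel.card_interedges_eq_sum]
      _ ≤ c * #A * #B := h
  have hcB : 0 < 2 * c * #B := by have := hB.card_pos; positivity
  have hsplit' : (#A : ℝ) =
      #{a ∈ A | deg a ≤ 2 * c * #B} + #{a ∈ A | ¬ deg a ≤ 2 * c * #B} := by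
    exact_mod_cast hsplit.symm
  nlinarith

lemma Rel.card_interedges_le_of_edgeDensity_le {A : Finset α} {B : Finset β} (hA : A.Nonempty)
    (hB : B.Nonempty) {c : ℝ} (h : (Rel.edgeDensity r A B : ℝ) ≤ c) :
    (#(Rel.interedges r A B) : ℝ) ≤ c * #A * #B := by
  have hAB : (0 : ℝ) < #A * #B := by have := hA.card_pos; have := hB.card_pos; positivity
  rw [Rel.edgeDensity, Rat.cast_div, div_le_iff₀ (by exact_mod_cast hAB)] at h
  push_cast at h
  linarith

end Counting

lemma SimpleGraph.exists_card_interedges_adj_iff_le {V : Type*} {G : SimpleGraph V}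
    [DecidableRel G.Adj] {A B : Finset V} (hA : A.Nonempty) (hB : B.Nonempty) {c : ℝ}
    (h : (G.edgeDensity A B : ℝ) ≤ c ∨ 1 - c ≤ (G.edgeDensity A B : ℝ)) :
    ∃ p : Prop, (#(Rel.interedges (fun a b => (G.Adj a b ↔ p)) A B) : ℝ) ≤ c * #A * #B := by
  rcases h with h | h
  · exact ⟨True, by simpa only [iff_true] using Rel.card_interedges_le_of_edgeDensity_le hA hB h⟩
  · have hcompl : (Rel.edgeDensity G.Adj A B : ℝ) +
        Rel.edgeDensity (fun a b => ¬ G.Adj a b) A B = 1 := by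
      exact_mod_cast Rel.edgeDensity_add_edgeDensity_compl G.Adj hA hB
    have hc : (Rel.edgeDensity (fun a b => ¬ G.Adj a b) A B : ℝ) ≤ c := by
      rw [SimpleGraph.edgeDensity] at h
      linarith
    exact ⟨False, by simpa only [iff_false] using Rel.card_interedges_le_of_edgeDensity_le hA hB hc⟩

def HasHomogeneousPairs (I : ∀ n : ℕ, SimpleGraph (Fin n) → Prop) (σ ε : ℝ) : Prop :=
  ∀ (n : ℕ) (G : SimpleGraph (Fin n)), 2 ≤ n → I n G →
    ∀ c : ℝ, 0 ≤ c → c ≤ 1 / 2 →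
      ∃ A B : Finset (Fin n), Disjoint A B ∧ A.Nonempty ∧ B.Nonempty ∧
        c ^ σ * n ≤ (A.card : ℝ) ∧ ε * n ≤ (B.card : ℝ) ∧
        ((G.edgeDensity A B : ℝ) ≤ c ∨ 1 - c ≤ (G.edgeDensity A B : ℝ))

section Iteration

variable {I : ∀ n : ℕ, SimpleGraph (Fin n) → Prop} {σ ε c x : ℝ}

lemma exists_cograph_homogeneous_to_large_set (hI : Hereditary I)
    (hdens : HasHomogeneousPairs I σ ε) (hc0 : 0 < c) (hc : c ≤ 1 / 2) {m : ℕ}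
    {H : SimpleGraph (Fin m)} (hH : I m H) (hm : 2 ≤ m) (hsmall : (phi H : ℝ) < 1 / (4 * c))
    (hx : 2 * x ≤ c ^ σ * m) :
    ∃ X S : Finset (Fin m), Disjoint X S ∧ IsCograph (H.induce (X : Set (Fin m))) ∧
      fI I x ≤ #X ∧ ε * m ≤ 2 * #S ∧ ∃ p : Prop, ∀ a ∈ X, ∀ b ∈ S, (H.Adj a b ↔ p) := by
  obtain ⟨A, B, hAB, hA, hB, hAcard, hBcard, hd⟩ := hdens m H hm hH c hc0.le hc
  obtain ⟨p, hp⟩ := H.exists_card_interedges_adj_iff_le hA hB hd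
  set R : Fin m → Fin m → Prop := fun a b => (H.Adj a b ↔ p)
  set A' := {a ∈ A | (#{b ∈ B | R a b} : ℝ) ≤ 2 * c * #B}
  have hA' : (#A : ℝ) ≤ 2 * #A' := card_le_two_mul_card_filter_of_card_interedges_le hc0 hp
  obtain ⟨t, htA', ht⟩ := exists_subset_card_eq (s := A') (n := ⌈x⌉₊)
    (Nat.ceil_le.2 (by linarith))
  obtain ⟨X, hXt, hXcard, hX⟩ := hI.exists_cograph_subset_fI_le hH ht
  have hXA' : X ⊆ A' := hXt.trans htA'
  set Bad := X.biUnion fun a => {b ∈ B | R a b}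
  have hBadB : Bad ⊆ B := biUnion_subset.2 fun _ _ => filter_subset _ _
  have hBpos : (0 : ℝ) < #B := by exact_mod_cast hB.card_pos
  have hBad : (#Bad : ℝ) ≤ #X * (2 * c * #B) :=
    calc (#Bad : ℝ) ≤ #X * ⌊2 * c * #B⌋₊ := by
          exact_mod_cast card_biUnion_le_card_mul X _ _ fun a ha =>
            Nat.le_floor (mem_filter.1 (hXA' ha)).2
      _ ≤ #X * (2 * c * #B) := by gcongr; exact Nat.floor_le (by positivity)
  have hXphi : (#X : ℝ) * (2 * c * #B) ≤ phi H * (2 * c * #B) := by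
    gcongr
    exact_mod_cast card_le_phi hX
  rw [lt_div_iff₀ (by positivity)] at hsmall
  have hBad2 : 2 * (#Bad : ℝ) ≤ #B := by nlinarith
  refine ⟨X, B \ Bad, ?_, hX, hXcard, ?_, ¬ p, fun a ha b hb => ?_⟩
  · exact disjoint_of_subset_left (hXA'.trans (filter_subset _ _)) (hAB.mono_right sdiff_subset)
  · rw [card_sdiff_of_subset hBadB, Nat.cast_sub (card_le_card hBadB)]
    linarith
  · obtain ⟨hbB, hbBad⟩ := mem_sdiff.1 hb
    have : ¬ R a b := fun h => hbBad (mem_biUnion.2 ⟨a, ha, mem_filter.2 ⟨hbB, h⟩⟩)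
    tauto

lemma mul_fI_le_phi (hI : Hereditary I) (hdens : HasHomogeneousPairs I σ ε)
    (hε0 : 0 < ε) (hε1 : ε ≤ 1) (hc0 : 0 < c) (hc : c ≤ 1 / 2) (hx : c ^ σ ≤ x) (r : ℕ) :
    ∀ {m : ℕ} {H : SimpleGraph (Fin m)}, I m H → (phi H : ℝ) < 1 / (4 * c) →
      (2 / ε) ^ r * (2 * x) ≤ c ^ σ * m → r * fI I x ≤ phi H := by
  have hcσ : 0 < c ^ σ := Real.rpow_pos_of_pos hc0 σ
  induction r with
  | zero => intros; simp
  | succ r ih =>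
    intro m H hH hsmall hbudget
    have hpow : 1 ≤ (2 / ε) ^ (r + 1) := one_le_pow₀ (by rw [le_div_iff₀ hε0]; linarith)
    have h2x : 2 * x ≤ c ^ σ * m := le_trans (le_mul_of_one_le_left (by linarith) hpow) hbudget
    have hm : 2 ≤ m := by
      have : c ^ σ * 2 ≤ c ^ σ * m := by linarith
      exact_mod_cast le_of_mul_le_mul_left this hcσ
    obtain ⟨X, S, hXS, hX, hXcard, hS, p, hp⟩ :=
      exists_cograph_homogeneous_to_large_set hI hdens hc0 hc hH hm hsmall h2x
    obtain ⟨Y, hYS, hY, hYcog⟩ := exists_cograph_subset_card_eq_phi_comap H (t := S) rfl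
    have hbudget' : (2 / ε) ^ r * (2 * x) ≤ c ^ σ * #S := by
      have := mul_le_mul_of_nonneg_left hS hcσ.le
      calc (2 / ε) ^ r * (2 * x) = ε / 2 * ((2 / ε) ^ (r + 1) * (2 * x)) := by
            rw [pow_succ]
            field_simp
        _ ≤ ε / 2 * (c ^ σ * m) := by gcongr
        _ ≤ c ^ σ * #S := by linarith
    have hsmall' : (phi (H.comap (S.orderEmbOfFin rfl)) : ℝ) < 1 / (4 * c) :=
      lt_of_le_of_lt (by exact_mod_cast phi_comap_orderEmbOfFin_le H rfl) hsmall
    have hrY : r * fI I x ≤ #Y := hY ▸ ih (hI.comap hH _) hsmall' hbudget'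
    have hcog : IsCograph (H.induce (↑(X ∪ Y) : Set (Fin m))) := by
      rw [coe_union]
      exact hX.induce_union hYcog p fun a ha b hb => hp a ha b (hYS hb)
    calc (r + 1) * fI I x = fI I x + r * fI I x := by ring
      _ ≤ #X + #Y := add_le_add hXcard hrY
      _ = #(X ∪ Y) := (card_union_of_disjoint (hXS.mono_right hYS)).symm
      _ ≤ phi H := card_le_phi hcog

end Iteration

section Numerics

variable {σ c : ℝ}

lemma rpow_le_rpow_two_mul_mul_of_logb_le (hc0 : 0 < c) {n : ℝ} (hn : 0 < n)
    (hlog : σ * Real.logb 2 (1 / c) ≤ Real.logb 2 n) : c ^ σ ≤ c ^ (2 * σ) * n := by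
  have hcσ : 0 < c ^ σ := Real.rpow_pos_of_pos hc0 σ
  rw [← Real.logb_rpow_eq_mul_logb_of_pos (one_div_pos.2 hc0),
    Real.logb_le_logb one_lt_two (by positivity) hn, Real.div_rpow zero_le_one hc0.le,
    Real.one_rpow] at hlog
  calc c ^ σ = c ^ σ * c ^ σ * (1 / c ^ σ) := by field_simp
    _ ≤ c ^ σ * c ^ σ * n := by gcongr
    _ = c ^ (2 * σ) * n := by rw [two_mul, Real.rpow_add hc0]

lemma two_div_pow_mul_le_of_le_div_logb (hc0 : 0 < c) {ε : ℝ} (hε0 : 0 < ε) (hε2 : ε < 2)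
    {K : ℕ} (hK : (K : ℝ) ≤ (σ * Real.logb 2 (1 / c) - 1) / Real.logb 2 (2 / ε))
    {n : ℝ} (hn : 0 ≤ n) : (2 / ε) ^ K * (2 * (c ^ (2 * σ) * n)) ≤ c ^ σ * n := by
  have hcσ : 0 < c ^ σ := Real.rpow_pos_of_pos hc0 σ
  have hlogε : 0 < Real.logb 2 (2 / ε) :=
    Real.logb_pos one_lt_two (by rw [lt_div_iff₀ hε0]; linarith)
  rw [le_div_iff₀ hlogε] at hK
  have hpow : (2 / ε) ^ K * 2 ≤ 1 / c ^ σ := by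
    rw [← Real.one_rpow σ, ← Real.div_rpow zero_le_one hc0.le,
      ← Real.logb_le_logb one_lt_two (by positivity) (by positivity),
      Real.logb_mul (by positivity) two_ne_zero, Real.logb_pow, Real.logb_self_eq_one one_lt_two,
      Real.logb_rpow_eq_mul_logb_of_pos (one_div_pos.2 hc0)]
    linarith
  calc (2 / ε) ^ K * (2 * (c ^ (2 * σ) * n)) = (2 / ε) ^ K * 2 * (c ^ σ * c ^ σ * n) := by
        rw [two_mul σ, Real.rpow_add hc0]
        ring
    _ ≤ 1 / c ^ σ * (c ^ σ * c ^ σ * n) := by gcongr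
    _ = c ^ σ * n := by field_simp

end Numerics

theorem f_iterated_step_general
    (I : ∀ n : ℕ, SimpleGraph (Fin n) → Prop) (hI : Hereditary I)
    (hall : ∀ m : ℕ, ∃ G : SimpleGraph (Fin m), I m G)
    (σ ε : ℝ) (hε0 : 0 < ε) (hε1 : ε ≤ 1)
    (hdens : ∀ (n : ℕ) (G : SimpleGraph (Fin n)), 2 ≤ n → I n G →
      ∀ c : ℝ, 0 ≤ c → c ≤ 1 / 2 →
        ∃ A B : Finset (Fin n), Disjoint A B ∧ A.Nonempty ∧ B.Nonempty ∧
          c ^ σ * n ≤ (A.card : ℝ) ∧ ε * n ≤ (B.card : ℝ) ∧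
          ((G.edgeDensity A B : ℝ) ≤ c ∨ 1 - c ≤ (G.edgeDensity A B : ℝ)))
    (n : ℕ) (hn : 2 ≤ n) (c : ℝ) (hc0 : 0 < c) (hc : c ≤ 1 / 2)
    (hlog : σ * Real.logb 2 (1 / c) ≤ Real.logb 2 n) :
    1 / (4 * c) ≤ (fI I n : ℝ) ∨
      (⌊(σ * Real.logb 2 (1 / c) - 1) / Real.logb 2 (2 / ε)⌋ : ℝ) *
          (fI I (c ^ (2 * σ) * n) : ℝ) ≤ (fI I n : ℝ) := by
  refine or_iff_not_imp_left.2 fun hbig => ?_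
  obtain ⟨G, hG, hGf⟩ := exists_phi_eq_fI hall n
  have hsmall : (phi G : ℝ) < 1 / (4 * c) := hGf ▸ not_le.1 hbig
  rcases lt_or_ge ⌊(σ * Real.logb 2 (1 / c) - 1) / Real.logb 2 (2 / ε)⌋ 0 with hK | hK
  · exact (mul_nonpos_of_nonpos_of_nonneg (by exact_mod_cast hK.le) (Nat.cast_nonneg _)).trans
      (Nat.cast_nonneg _)
  obtain ⟨K, hKeq⟩ := Int.eq_ofNat_of_zero_le hK
  have hKle : (K : ℝ) ≤ (σ * Real.logb 2 (1 / c) - 1) / Real.logb 2 (2 / ε) := by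
    simpa only [hKeq, Int.cast_natCast] using
      Int.floor_le ((σ * Real.logb 2 (1 / c) - 1) / Real.logb 2 (2 / ε))
  have hn0 : (0 : ℝ) < n := by exact_mod_cast (by omega : 0 < n)
  have hKf := mul_fI_le_phi hI hdens hε0 hε1 hc0 hc
    (rpow_le_rpow_two_mul_mul_of_logb_le hc0 hn0 hlog) K hG hsmall
    (two_div_pow_mul_le_of_le_div_logb hc0 hε0 (by linarith) hKle hn0.le)
  rw [hKeq, Int.cast_natCast, ← hGf]
  exact_mod_cast hKf

/-- Step (2): for all `n ≥ 2` and `0 < c ≤ 1/2` with `log n ≥ σ log(1/c)`, either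
`f(n) ≥ 1/(4c)` or `f(n) ≥ k·f(c^(2σ)·n)` where
`k = ⌊(σ log(1/c) - 1)/log(2/ε)⌋` (logs base 2). -/
theorem f_iterated_step
    (I : ∀ n : ℕ, SimpleGraph (Fin n) → Prop) (hI : Hereditary I)
    (hall : ∀ m : ℕ, ∃ G : SimpleGraph (Fin m), I m G)
    (σ ε : ℝ) (hσ : 1 ≤ σ) (hε0 : 0 < ε) (hε1 : ε ≤ 1)
    (hdens : ∀ (n : ℕ) (G : SimpleGraph (Fin n)), 2 ≤ n → I n G →
      ∀ c : ℝ, 0 ≤ c → c ≤ 1 / 2 →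
        ∃ A B : Finset (Fin n), Disjoint A B ∧ A.Nonempty ∧ B.Nonempty ∧
          c ^ σ * n ≤ (A.card : ℝ) ∧ ε * n ≤ (B.card : ℝ) ∧
          ((G.edgeDensity A B : ℝ) ≤ c ∨ 1 - c ≤ (G.edgeDensity A B : ℝ)))
    (n : ℕ) (hn : 2 ≤ n) (c : ℝ) (hc0 : 0 < c) (hc : c ≤ 1 / 2)
    (hlog : σ * Real.logb 2 (1 / c) ≤ Real.logb 2 n) :
    1 / (4 * c) ≤ (fI I n : ℝ) ∨
      (⌊(σ * Real.logb 2 (1 / c) - 1) / Real.logb 2 (2 / ε)⌋ : ℝ) *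
          (fI I (c ^ (2 * σ) * n) : ℝ) ≤ (fI I n : ℝ) :=
  f_iterated_step_general I hI hall σ ε hε0 hε1 hdens n hn c hc0 hc hlog
end
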